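/- arXiv:cs/0403027 — 3 statements merged into one kernel-verified Lean document; each statement's English description precedes it below -/
import Mathlib

section
/- Let M be a finite type with at least two elements, let f : M → [0,1] assign to each element of M a value in the unit interval, and let c : [0,1] → [0,1] be an involutive complement (c(c(x)) = x for all x, c is order-reversing, c(0) = 1 and c(1) = 0). Suppose that for every m₀ ∈ M the supremum of f(m) over all m ≠ m₀ equals c(f(m₀)). Then there exist α ∈ [0,1] and m₁ ∈ M such that f(m) = min(α, c(α)) for every m ≠ m₁ and f(m₁) = max(α, c(α)). -/
/-- An involutive complement on [0,1] forces the almost-crisp situation: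
there is an α such that the membership value is min(α, c α) on all membranes
but one, and max(α, c α) on the remaining one. -/
theorem stmt_0 {M : Type*} [Fintype M] (hM : 1 < Fintype.card M)
    (f : M → ℝ) (hf : ∀ m, f m ∈ Set.Icc (0:ℝ) 1)
    (c : ℝ → ℝ)
    (hc_mem : ∀ x ∈ Set.Icc (0:ℝ) 1, c x ∈ Set.Icc (0:ℝ) 1)
    (hc_inv : ∀ x ∈ Set.Icc (0:ℝ) 1, c (c x) = x)
    (hc_anti : ∀ x ∈ Set.Icc (0:ℝ) 1, ∀ y ∈ Set.Icc (0:ℝ) 1, x ≤ y → c y ≤ c x)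
    (hc0 : c 0 = 1) (hc1 : c 1 = 0)
    (hsup : ∀ m₀ : M, sSup {r : ℝ | ∃ m : M, m ≠ m₀ ∧ f m = r} = c (f m₀)) :
    ∃ α ∈ Set.Icc (0:ℝ) 1, ∃ m₁ : M,
      (∀ m : M, m ≠ m₁ → f m = min α (c α)) ∧ f m₁ = max α (c α) := by
  have hne : Nonempty M := Fintype.card_pos_iff.mp (by omega)
  obtain ⟨m₁, hm₁⟩ := Finite.exists_max f
  have hbdd : ∀ m : M, BddAbove {r : ℝ | ∃ m' : M, m' ≠ m ∧ f m' = r} := by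
    intro m
    exact ⟨f m₁, by rintro r ⟨m', _, rfl⟩; exact hm₁ m'⟩
  have key : ∀ m, m ≠ m₁ → f m = c (f m₁) := by
    intro m hm
    have h1 : sSup {r : ℝ | ∃ m' : M, m' ≠ m ∧ f m' = r} = f m₁ := by
      apply le_antisymm
      · refine csSup_le ?_ ?_
        · exact ⟨f m₁, m₁, Ne.symm hm, rfl⟩
        · rintro r ⟨m', _, rfl⟩; exact hm₁ m'
      · exact le_csSup (hbdd m) ⟨m₁, Ne.symm hm, rfl⟩
    have h2 := hsup m
    rw [h1] at h2
    have h3 := hc_inv (f m) (hf m)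
    rw [← h2] at h3
    exact h3.symm
  -- get some element different from m₁
  obtain ⟨m₂, hm₂⟩ := Fintype.exists_ne_of_one_lt_card hM m₁
  have hle : c (f m₁) ≤ f m₁ := by
    have := key m₂ hm₂
    calc c (f m₁) = f m₂ := (key m₂ hm₂).symm
    _ ≤ f m₁ := hm₁ m₂
  refine ⟨f m₁, hf m₁, m₁, ?_, ?_⟩
  · intro m hm
    rw [min_eq_right hle]
    exact key m hm
  · rw [max_eq_left hle]
end

section
/- Let I be a finite subset of [0,1] with 0 ∈ I, write I⁺ = I \ {0}, let C be an arbitrary type, and let H : C → I⁺ → ℕ be a family of functions. Define Gen : ℕ → [0,1] by Gen(n) = sup { t ∈ I⁺ : there exists c ∈ C with H(c)(t) = n }. Assume that for every t ∈ I⁺ the set {n ∈ ℕ : ∃ c ∈ C, H(c)(t) = n} is recursively enumerable. Then for every t₀ ∈ (0,1], the t₀-level {n ∈ ℕ : Gen(n) ≥ t₀} is a recursively enumerable subset of ℕ; that is, Gen is a recursively enumerable finite-valued fuzzy subset of ℕ. -/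
/-!
The supremum of a finite set of reals is attained, so `t₀ ≤ Gen n` holds exactly when some
`t ∈ I⁺` with `t₀ ≤ t` is produced at `n`. The `t₀`-level is therefore a finite union of the
recursively enumerable sets `{n | ∃ c, H c t = n}`, and recursively enumerable predicates are
closed under finite disjunction by dovetailing (`Partrec.merge'`).
-/

namespace REPred

variable {α : Type*} [Primcodable α]

theorem false : REPred fun _ : α => False :=
  (Partrec.none : Partrec fun _ : α => (Part.none : Part Unit)).dom_re

theorem or {p q : α → Prop} (hp : REPred p) (hq : REPred q) : REPred fun a => p a ∨ q a := by
  obtain ⟨k, hk, hdom⟩ := Partrec.merge' hp hq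
  exact hk.dom_re.of_eq fun a => by simp [(hdom a).2, Part.assert]

theorem exists_mem_finset {β : Type*} (s : Finset β) {p : β → α → Prop}
    (hp : ∀ b ∈ s, REPred (p b)) : REPred fun a => ∃ b ∈ s, p b a := by
  classical
  induction s using Finset.induction with
  | empty => exact false.of_eq fun a => by simp
  | insert b s _ ih =>
    have hs : REPred fun a => ∃ b ∈ s, p b a := ih fun b hb => hp b (Finset.mem_insert_of_mem hb)
    exact ((hp b (Finset.mem_insert_self b s)).or hs).of_eq fun a => by simp

theorem exists_mem_of_finite {β : Type*} {s : Set β} (hs : s.Finite) {p : β → α → Prop}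
    (hp : ∀ b ∈ s, REPred (p b)) : REPred fun a => ∃ b ∈ s, p b a :=
  (exists_mem_finset hs.toFinset fun b hb => hp b (hs.mem_toFinset.1 hb)).of_eq fun a => by simp

end REPred

theorem Set.Finite.le_csSup_iff {α : Type*} [ConditionallyCompleteLinearOrder α] {s : Set α}
    {a : α} (hs : s.Finite) (ha : sSup (∅ : Set α) < a) : a ≤ sSup s ↔ ∃ t ∈ s, a ≤ t := by
  rcases s.eq_empty_or_nonempty with rfl | hne
  · simpa using ha
  · simpa using (hs.csSup_lt_iff hne).not

theorem stmt_5_general {C : Type*} (I : Set ℝ) (hIfin : I.Finite)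
    (H : C → ℝ → ℕ)
    (Gen : ℕ → ℝ)
    (hGen : ∀ n : ℕ, Gen n = sSup {t : ℝ | t ∈ I \ {0} ∧ ∃ c : C, H c t = n})
    (hRE : ∀ t ∈ I \ {0}, REPred (fun n : ℕ => ∃ c : C, H c t = n)) :
    (∀ t₀ : ℝ, 0 < t₀ → t₀ ≤ 1 → REPred (fun n : ℕ => t₀ ≤ Gen n)) ∧
      (Set.range Gen).Finite := by
  constructor
  · intro t₀ ht₀ _
    have hlevel : ∀ n : ℕ, (t₀ ≤ Gen n) ↔ ∃ t ∈ {t | t ∈ I \ {0} ∧ t₀ ≤ t}, ∃ c, H c t = n := by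
      intro n
      rw [hGen, (hIfin.subset fun t ht => ht.1.1).le_csSup_iff (by simpa using ht₀)]
      grind
    exact (REPred.exists_mem_of_finite (hIfin.subset fun t ht => ht.1.1)
      fun t ht => hRE t ht.1).of_eq fun n => (hlevel n).symm
  · have hrange : Set.range Gen ⊆ sSup '' {S | S ⊆ I} := by
      rintro x ⟨n, rfl⟩
      exact ⟨_, fun t ht => ht.1.1, (hGen n).symm⟩
    exact (hIfin.finite_subsets.image _).subset hrange

/-- If each fiber {n | ∃ c, H c t = n} (t ∈ I⁺) is recursively enumerable, then
every t₀-level of Gen with t₀ ∈ (0,1] is recursively enumerable; moreover Gen is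
finite-valued. -/
theorem stmt_5 {C : Type*} (I : Set ℝ) (hIfin : I.Finite)
    (hI : I ⊆ Set.Icc (0:ℝ) 1) (h0 : (0:ℝ) ∈ I)
    (H : C → ℝ → ℕ)
    (Gen : ℕ → ℝ)
    (hGen : ∀ n : ℕ, Gen n = sSup {t : ℝ | t ∈ I \ {0} ∧ ∃ c : C, H c t = n})
    (hRE : ∀ t ∈ I \ {0}, REPred (fun n : ℕ => ∃ c : C, H c t = n)) :
    (∀ t₀ : ℝ, 0 < t₀ → t₀ ≤ 1 → REPred (fun n : ℕ => t₀ ≤ Gen n)) ∧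
      (Set.range Gen).Finite :=
  stmt_5_general I hIfin H Gen hGen hRE
end

section
/- Let J = {t₀, t₁, …, t_m} be a finite subset of [0,1] with t₀ = 0 < t₁ < … < t_m = 1, and let S ⊆ (0,1] be a set with the following property: for every l ∈ {0, …, m−1} and every t with t_l < t < t_{l+1}, if t ∈ S then the whole interval [t_l, t_{l+1}) ∩ (0,1] is contained in S. Then the supremum of S (taken in [0,1], with sup ∅ = 0) belongs to J. -/
/-!
If `sup S` lay strictly between consecutive thresholds `t_l < t_{l+1}`, some point of `S` would
lie in that gap, so `S` would contain the whole gap and hence points above its own supremum.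
-/

open Set

theorem Fin.exists_castSucc_le_and_lt_succ {α : Type*} [LinearOrder α] {m : ℕ}
    (t : Fin (m + 1) → α) {a : α} (h0 : t 0 ≤ a) (hlast : a < t (Fin.last m)) :
    ∃ l : Fin m, t l.castSucc ≤ a ∧ a < t l.succ := by
  classical
  have hex : ∃ k, a < t k := ⟨Fin.last m, hlast⟩
  obtain ⟨l, hl⟩ : ∃ l : Fin m, l.succ = Fin.find (fun k => a < t k) hex :=
    Fin.exists_succ_eq.mpr fun h => (h ▸ Fin.find_spec hex).not_ge h0
  exact ⟨l, not_lt.mp (Fin.find_min hex (hl ▸ Fin.castSucc_lt_succ)), hl ▸ Fin.find_spec hex⟩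

theorem csSup_notMem_Ioo_of_saturated {α : Type*} [ConditionallyCompleteLinearOrder α]
    [DenselyOrdered α] {S : Set α} {a b : α} (hbdd : BddAbove S) (hne : S.Nonempty)
    (hsat : ∀ x ∈ S, a < x → x < b → Ioo a b ⊆ S) : sSup S ∉ Ioo a b := by
  rintro ⟨has, hsb⟩
  obtain ⟨x, hxS, hax⟩ := exists_lt_of_lt_csSup hne has
  obtain ⟨y, hsy, hyb⟩ := exists_between hsb
  have hyS : y ∈ S := hsat x hxS hax ((le_csSup hbdd hxS).trans_lt hsb) ⟨has.trans hsy, hyb⟩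
  exact (le_csSup hbdd hyS).not_gt hsy

/-- If S ⊆ (0,1] is saturated with respect to the intervals determined by the
finite set J = {t₀ = 0 < t₁ < … < t_m = 1} (whenever S contains a point strictly
between two consecutive elements of J, it contains the whole half-open interval
between them, intersected with (0,1]), then sup S ∈ J. -/
theorem stmt_9 (m : ℕ) (t : Fin (m + 1) → ℝ) (hmono : StrictMono t)
    (h0 : t 0 = 0) (h1 : t (Fin.last m) = 1)
    (S : Set ℝ) (hS : S ⊆ Set.Ioc (0:ℝ) 1)
    (hprop : ∀ l : Fin m, ∀ x ∈ S, t l.castSucc < x → x < t l.succ →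
        Set.Ico (t l.castSucc) (t l.succ) ∩ Set.Ioc (0:ℝ) 1 ⊆ S) :
    sSup S ∈ Set.range t := by
  rcases S.eq_empty_or_nonempty with rfl | hne
  · exact ⟨0, by rw [h0, Real.sSup_empty]⟩
  by_contra hnot
  have hbdd : BddAbove S := ⟨1, fun x hx => (hS hx).2⟩
  obtain ⟨x, hx⟩ := hne
  have hpos : t 0 < sSup S := h0 ▸ (hS hx).1.trans_le (le_csSup hbdd hx)
  have hlt1 : sSup S < t (Fin.last m) := h1 ▸ (csSup_le ⟨x, hx⟩ fun y hy => (hS hy).2).lt_of_ne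
    fun h => hnot ⟨Fin.last m, h1.trans h.symm⟩
  obtain ⟨l, hl, hlu⟩ := Fin.exists_castSucc_le_and_lt_succ t hpos.le hlt1
  have hgap : Ioo (t l.castSucc) (t l.succ) ⊆ Ioc 0 1 := fun z hz =>
    ⟨h0 ▸ (hmono.monotone (Fin.zero_le _)).trans_lt hz.1,
      h1 ▸ hz.2.le.trans (hmono.monotone (Fin.le_last _))⟩
  have hsat : ∀ y ∈ S, t l.castSucc < y → y < t l.succ → Ioo (t l.castSucc) (t l.succ) ⊆ S :=
    fun y hy hly hyu z hz => hprop l y hy hly hyu ⟨Ioo_subset_Ico_self hz, hgap hz⟩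
  exact csSup_notMem_Ioo_of_saturated hbdd ⟨x, hx⟩ hsat ⟨hl.lt_of_ne fun h => hnot ⟨_, h⟩, hlu⟩
end
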